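/- Suppose (m,p) and (m̃,p̃) are KHK-related for the Lagrange top and m3 ≠ 0. Define r(m,p) = (2α−1) + ε²(α−1)(m1²+m2²) + (ε²γ/m3)(m1p1+m2p2) and s(m,p) = 1 + ε²α(1−α)m3² − ε²γp3. Then r(m̃,p̃)·s(m,p) = r(m,p)·s(m̃,p̃); that is, the quadratic-fractional function I0(m,p) = r(m,p)/s(m,p) is an integral of motion of the Kahan–Hirota–Kimura discretization of the Lagrange top. (Note m̃3 = m3, so r(m̃,p̃) is well defined.) -/

import Mathlib

/-- `(m,p)` and `(n,q)` are KHK-related for the Lagrange top. -/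
def LagrangeKHK (ε α γ m1 m2 m3 p1 p2 p3 n1 n2 n3 q1 q2 q3 : ℝ) : Prop :=
  n1 - m1 = ε * (α - 1) * (n2 * m3 + m2 * n3) + ε * γ * (p2 + q2) ∧
  n2 - m2 = ε * (1 - α) * (n3 * m1 + m3 * n1) - ε * γ * (p1 + q1) ∧
  n3 = m3 ∧
  q1 - p1 = ε * α * (p2 * n3 + q2 * m3) - ε * (p3 * n2 + q3 * m2) ∧
  q2 - p2 = ε * (p3 * n1 + q3 * m1) - ε * α * (p1 * n3 + q1 * m3) ∧
  q3 - p3 = ε * (p1 * n2 + q1 * m2 - p2 * n1 - q2 * m1)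

noncomputable def lr (ε α γ m1 m2 m3 p1 p2 : ℝ) : ℝ :=
  (2 * α - 1) + ε ^ 2 * (α - 1) * (m1 ^ 2 + m2 ^ 2)
    + (ε ^ 2 * γ / m3) * (m1 * p1 + m2 * p2)
noncomputable def ls (ε α γ m3 p3 : ℝ) : ℝ :=
  1 + ε ^ 2 * α * (1 - α) * m3 ^ 2 - ε ^ 2 * γ * p3

/-!
Since `m̃₃ = m₃`, multiplying `r` by `m₃` turns the claim into a polynomial identity, and the
difference of its two sides lies in the ideal generated by the other five KHK relations; the
linear combination below is an explicit certificate of this membership.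
-/

def lrNumerator (ε α γ m1 m2 m3 p1 p2 : ℝ) : ℝ :=
  (2 * α - 1) * m3 + ε ^ 2 * (α - 1) * m3 * (m1 ^ 2 + m2 ^ 2) + ε ^ 2 * γ * (m1 * p1 + m2 * p2)

theorem lr_eq_lrNumerator_div {ε α γ m1 m2 m3 p1 p2 : ℝ} (hm3 : m3 ≠ 0) :
    lr ε α γ m1 m2 m3 p1 p2 = lrNumerator ε α γ m1 m2 m3 p1 p2 / m3 := by
  unfold lr lrNumerator
  field_simp

theorem lrNumerator_mul_ls_eq_of_lagrangeKHK
    {ε α γ m1 m2 m3 p1 p2 p3 n1 n2 n3 q1 q2 q3 : ℝ}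
    (hK : LagrangeKHK ε α γ m1 m2 m3 p1 p2 p3 n1 n2 n3 q1 q2 q3) :
    lrNumerator ε α γ n1 n2 n3 q1 q2 * ls ε α γ m3 p3
      = lrNumerator ε α γ m1 m2 m3 p1 p2 * ls ε α γ n3 q3 := by
  obtain ⟨h1, h2, rfl, h4, h5, h6⟩ := hK
  unfold lrNumerator ls
  let κ := ε * (1 + ε ^ 2 * α * (1 - α) * n3 ^ 2)
  linear_combination
    (-κ * (n2 - m2) - ε ^ 2 * γ * q1 + ε ^ 3 * γ * (α * n3 * q2 - m2 * q3)) * h1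
      + (κ * (n1 - m1) - ε ^ 2 * γ * q2 - ε ^ 3 * γ * (α * n3 * q1 - m1 * q3)) * h2
      + ε ^ 2 * γ * (n1 - ε * γ * q2 + ε * (1 - α) * n3 * n2) * h4
      + ε ^ 2 * γ * (n2 + ε * γ * q1 - ε * (1 - α) * n3 * n1) * h5
      + ε ^ 2 * γ * (2 * α - 1) * n3 * h6

/-- Quadratic-fractional integral `I₀ = r/s` of the KHK discretization of the
Lagrange top (Theorem 17). -/
theorem lagrange_quadratic_fractional_integral
    (ε α γ : ℝ) (m1 m2 m3 p1 p2 p3 n1 n2 n3 q1 q2 q3 : ℝ) (hm3 : m3 ≠ 0)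
    (hK : LagrangeKHK ε α γ m1 m2 m3 p1 p2 p3 n1 n2 n3 q1 q2 q3) :
    lr ε α γ n1 n2 n3 q1 q2 * ls ε α γ m3 p3
    = lr ε α γ m1 m2 m3 p1 p2 * ls ε α γ n3 q3 := by
  have hn3 : n3 = m3 := hK.2.2.1
  rw [lr_eq_lrNumerator_div (hn3 ▸ hm3), lr_eq_lrNumerator_div hm3, div_mul_eq_mul_div,
    div_mul_eq_mul_div, lrNumerator_mul_ls_eq_of_lagrangeKHK hK, hn3]
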